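/- Let k be a field, G a group, and (H_i)_{0 ≤ i ≤ n} a decreasing Hopf algebra filtration of the group algebra kG with H_n = 0. Let V be a Yetter–Drinfeld module over kG with coaction δ : V → kG ⊗ V determined by δ(v) = x ⊗ v for v ∈ V_x, and set F^iV = H_iV for all i ≥ 0. Then: (i) δ(F^iV) ⊆ Σ_{k≥0} H_k ⊗ F^{i−k}V for all i ≥ 0; and (ii) (F^iV)_{i≥0} is a decreasing filtration of the braided vector space (V, c), i.e., F^0V = V, F^iV ⊇ F^jV for i ≤ j, ∩_{i≥0} F^iV = 0, and c(F^iV ⊗ F^jV) ⊆ Σ_{k+l ≥ i+j} F^kV ⊗ F^lV for all i, j ≥ 0. -/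

import Mathlib

/-!
For `v ∈ V_x` the coaction is `δ(a v) = ad_x(a₍₁₎) ⊗ a₍₂₎ v` with `ad_x b = b₍₁₎ x S(b₍₂₎)`
(on `g ∈ G`: `δ(g v) = g x g⁻¹ ⊗ g v`). The filtration axioms make `ad_x` preserve every `H_j`,
so `Δ(H_i) ⊆ Σ H_j ⊗ H_{i-j}` gives (i). The braiding is `c(u ⊗ w) = u₍₋₁₎ w ⊗ u₍₀₎`, so (ii)
follows from (i) and `H_k F^jV ⊆ F^{k+j}V`.
-/

open TensorProduct

/-- The image `P ⊗ Q` of a tensor product of two submodules inside `M ⊗[k] N`. -/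
noncomputable def subTensor14 {k : Type*} [CommSemiring k] {M N : Type*}
    [AddCommMonoid M] [Module k M] [AddCommMonoid N] [Module k N]
    (P : Submodule k M) (Q : Submodule k N) : Submodule k (M ⊗[k] N) :=
  LinearMap.range (TensorProduct.map P.subtype Q.subtype)

/-- The subspace `N V` of a module `V` spanned by products `a • v` with `a` in a subspace `N`
of the acting algebra. -/
def subSMul14 {k : Type*} [CommSemiring k] {A : Type*} [Semiring A] [Algebra k A]
    {V : Type*} [AddCommMonoid V] [Module k V] [Module A V] [IsScalarTower k A V]
    (N : Submodule k A) : Submodule k V :=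
  Submodule.span k {w : V | ∃ a ∈ N, ∃ v : V, w = a • v}

section SubTensor

variable {k M N M' N' : Type*} [CommSemiring k] [AddCommMonoid M] [Module k M]
  [AddCommMonoid N] [Module k N] [AddCommMonoid M'] [Module k M'] [AddCommMonoid N'] [Module k N']
  {P : Submodule k M} {Q : Submodule k N}

theorem subTensor14_eq_map₂ (P : Submodule k M) (Q : Submodule k N) :
    subTensor14 P Q = Submodule.map₂ (TensorProduct.mk k M N) P Q :=
  TensorProduct.range_mapIncl P Q

theorem tmul_mem_subTensor14 {p : M} {q : N} (hp : p ∈ P) (hq : q ∈ Q) :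
    p ⊗ₜ[k] q ∈ subTensor14 P Q := by
  rw [subTensor14_eq_map₂]
  exact Submodule.apply_mem_map₂ _ hp hq

theorem subTensor14_le_iff {W : Submodule k (M ⊗[k] N)} :
    subTensor14 P Q ≤ W ↔ ∀ p ∈ P, ∀ q ∈ Q, p ⊗ₜ[k] q ∈ W := by
  rw [subTensor14_eq_map₂, Submodule.map₂_le]
  rfl

theorem map_mem_subTensor14 {P' : Submodule k M'} {Q' : Submodule k N'}
    (f : M →ₗ[k] M') (g : N →ₗ[k] N') (hf : ∀ p ∈ P, f p ∈ P') (hg : ∀ q ∈ Q, g q ∈ Q')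
    {t : M ⊗[k] N} (ht : t ∈ subTensor14 P Q) :
    TensorProduct.map f g t ∈ subTensor14 P' Q' := by
  refine (subTensor14_le_iff (W := (subTensor14 P' Q').comap _)).2 (fun p hp q hq => ?_) ht
  exact tmul_mem_subTensor14 (hf p hp) (hg q hq)

end SubTensor

section SubSMul

variable {k A V : Type*} [CommSemiring k] [Semiring A] [Algebra k A]
  [AddCommMonoid V] [Module k V] [Module A V] [IsScalarTower k A V] {N N' : Submodule k A}

theorem smul_mem_subSMul14 {a : A} (ha : a ∈ N) (v : V) : a • v ∈ subSMul14 (V := V) N :=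
  Submodule.subset_span ⟨a, ha, v, rfl⟩

theorem subSMul14_le_iff {W : Submodule k V} :
    subSMul14 N ≤ W ↔ ∀ a ∈ N, ∀ v : V, a • v ∈ W := by
  refine Submodule.span_le.trans ⟨fun h a ha v => h ⟨a, ha, v, rfl⟩, ?_⟩
  rintro h _ ⟨a, ha, v, rfl⟩
  exact h a ha v

theorem subSMul14_mono (h : N ≤ N') : subSMul14 (V := V) N ≤ subSMul14 N' :=
  subSMul14_le_iff.2 fun _ ha v => smul_mem_subSMul14 (h ha) v

@[simp] theorem subSMul14_top : subSMul14 (V := V) (⊤ : Submodule k A) = ⊤ :=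
  eq_top_iff.2 fun v _ => one_smul A v ▸ smul_mem_subSMul14 Submodule.mem_top v

@[simp] theorem subSMul14_bot : subSMul14 (V := V) (⊥ : Submodule k A) = ⊥ :=
  eq_bot_iff.2 <| subSMul14_le_iff.2 fun _ ha v => by
    rw [(Submodule.mem_bot k).1 ha, zero_smul]
    exact Submodule.zero_mem _

theorem smul_mem_subSMul14_of_mul_le {N'' : Submodule k A} (hmul : N * N' ≤ N'') {a : A}
    (ha : a ∈ N) {w : V} (hw : w ∈ subSMul14 N') : a • w ∈ subSMul14 (V := V) N'' := by
  refine (subSMul14_le_iff (W := (subSMul14 N'').comap (DistribSMul.toLinearMap k V a))).2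
    (fun b hb v => ?_) hw
  simpa only [Submodule.mem_comap, DistribSMul.toLinearMap_apply, ← mul_smul] using
    smul_mem_subSMul14 (hmul (Submodule.mul_mem_mul ha hb)) v

end SubSMul

section AdjointAction

variable {k A : Type*} [CommSemiring k] [Semiring A] [Algebra k A]

/-- `b ↦ b₍₁₎ x S(b₍₂₎)`, which sends a group-like `g` to `g x g⁻¹`. -/
noncomputable def adjointAction (Δ : A →ₗ[k] A ⊗[k] A) (S : A →ₗ[k] A) (x : A) : A →ₗ[k] A :=
  LinearMap.mul' k A ∘ₗ TensorProduct.map (LinearMap.mulRight k x) S ∘ₗ Δ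

theorem adjointAction_mem {Δ : A →ₗ[k] A ⊗[k] A} {S : A →ₗ[k] A} {H : ℕ → Submodule k A}
    (hH0 : H 0 = ⊤) (hHmul : ∀ i j : ℕ, H i * H j ≤ H (i + j))
    (hHΔ : ∀ i : ℕ, ∀ x ∈ H i, Δ x ∈ ⨆ j : Fin (i + 1), subTensor14 (H j) (H (i - (j : ℕ))))
    (hHS : ∀ i : ℕ, 1 ≤ i → ∀ x ∈ H i, S x ∈ H i) (x : A) {i : ℕ} {b : A} (hb : b ∈ H i) :
    adjointAction Δ S x b ∈ H i := by
  have hS : ∀ j, ∀ y ∈ H j, S y ∈ H j := fun j y hy => by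
    rcases Nat.eq_zero_or_pos j with rfl | hj
    · simp [hH0]
    · exact hHS j hj y hy
  have hx : x ∈ H 0 := hH0 ▸ Submodule.mem_top
  refine (iSup_le fun j => subTensor14_le_iff.2 fun p hp q hq => ?_ :
    _ ≤ (H i).comap (LinearMap.mul' k A ∘ₗ TensorProduct.map (LinearMap.mulRight k x) S))
    (hHΔ i b hb)
  have hpx : p * x ∈ H j := hHmul j 0 (Submodule.mul_mem_mul hp hx)
  simpa [Nat.add_sub_cancel' (Nat.le_of_lt_succ j.isLt)] using
    hHmul j (i - j) (Submodule.mul_mem_mul hpx (hS _ q hq))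

end AdjointAction

section YetterDrinfeld

open MonoidAlgebra

variable {k G V : Type*} [CommSemiring k] [Group G] [AddCommMonoid V] [Module k V]
  [Module (MonoidAlgebra k G) V] [IsScalarTower k (MonoidAlgebra k G) V]
  {Δ : MonoidAlgebra k G →ₗ[k] MonoidAlgebra k G ⊗[k] MonoidAlgebra k G}
  {S : MonoidAlgebra k G →ₗ[k] MonoidAlgebra k G} {Vx : G → Submodule k V}
  {δ : V →ₗ[k] MonoidAlgebra k G ⊗[k] V}

theorem adjointAction_of (hΔ : ∀ g : G, Δ (of k G g) = of k G g ⊗ₜ[k] of k G g)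
    (hS : ∀ g : G, S (of k G g) = of k G g⁻¹) (x g : G) :
    adjointAction Δ S (of k G x) (of k G g) = of k G (g * x * g⁻¹) := by
  rw [adjointAction, LinearMap.comp_apply, LinearMap.comp_apply, hΔ, TensorProduct.map_tmul,
    LinearMap.mul'_apply, LinearMap.mulRight_apply, hS, map_mul, map_mul]

theorem coaction_smul (hΔ : ∀ g : G, Δ (of k G g) = of k G g ⊗ₜ[k] of k G g)
    (hS : ∀ g : G, S (of k G g) = of k G g⁻¹)
    (hcompat : ∀ g x : G, ∀ v ∈ Vx x, of k G g • v ∈ Vx (g * x * g⁻¹))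
    (hδ : ∀ x : G, ∀ v ∈ Vx x, δ v = of k G x ⊗ₜ[k] v) {x : G} {v : V} (hv : v ∈ Vx x)
    (a : MonoidAlgebra k G) :
    δ (a • v) =
      TensorProduct.map (adjointAction Δ S (of k G x)) (LinearMap.smulRight .id v) (Δ a) := by
  induction a using MonoidAlgebra.induction_on with
  | of g =>
    rw [hδ _ _ (hcompat g x v hv), hΔ, TensorProduct.map_tmul, adjointAction_of hΔ hS,
      LinearMap.smulRight_apply, LinearMap.id_apply]
  | add a b ha hb => simp only [add_smul, map_add, ha, hb]
  | smul r a ha => simp only [smul_assoc, map_smul, ha]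

theorem braiding_tmul (hVx : ⨆ x, Vx x = ⊤) (hδ : ∀ x : G, ∀ v ∈ Vx x, δ v = of k G x ⊗ₜ[k] v)
    {c : V ⊗[k] V →ₗ[k] V ⊗[k] V}
    (hc : ∀ g : G, ∀ u ∈ Vx g, ∀ v : V, c (u ⊗ₜ[k] v) = (of k G g • v) ⊗ₜ[k] u) (u w : V) :
    c (u ⊗ₜ[k] w) = TensorProduct.map (LinearMap.smulRight .id w) .id (δ u) := by
  have hu : u ∈ ⨆ x, Vx x := hVx ▸ Submodule.mem_top
  refine Submodule.iSup_induction Vx hu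
    (motive := fun u => c (u ⊗ₜ[k] w) = TensorProduct.map (LinearMap.smulRight .id w) .id (δ u))
    (fun x u hu => ?_) (by simp) (fun u u' hu hu' => by simp only [add_tmul, map_add, hu, hu'])
  rw [hc x u hu, hδ x u hu, TensorProduct.map_tmul, LinearMap.smulRight_apply, LinearMap.id_apply,
    LinearMap.id_apply]

theorem coaction_mem_filtration (hΔ : ∀ g : G, Δ (of k G g) = of k G g ⊗ₜ[k] of k G g)
    (hS : ∀ g : G, S (of k G g) = of k G g⁻¹) {H : ℕ → Submodule k (MonoidAlgebra k G)}
    (hH0 : H 0 = ⊤) (hHmul : ∀ i j : ℕ, H i * H j ≤ H (i + j))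
    (hHΔ : ∀ i : ℕ, ∀ x ∈ H i, Δ x ∈ ⨆ j : Fin (i + 1), subTensor14 (H j) (H (i - (j : ℕ))))
    (hHS : ∀ i : ℕ, 1 ≤ i → ∀ x ∈ H i, S x ∈ H i) (hVx : ⨆ x, Vx x = ⊤)
    (hcompat : ∀ g x : G, ∀ v ∈ Vx x, of k G g • v ∈ Vx (g * x * g⁻¹))
    (hδ : ∀ x : G, ∀ v ∈ Vx x, δ v = of k G x ⊗ₜ[k] v) {i : ℕ} {w : V}
    (hw : w ∈ subSMul14 (V := V) (H i)) :
    δ w ∈ ⨆ kk : ℕ, subTensor14 (H kk) (subSMul14 (V := V) (H (i - kk))) := by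
  set T := ⨆ kk : ℕ, subTensor14 (H kk) (subSMul14 (V := V) (H (i - kk)))
  suffices ∀ a ∈ H i, ∀ v, δ (a • v) ∈ T from (subSMul14_le_iff (W := T.comap δ)).2 this hw
  intro a ha v
  have hv : v ∈ ⨆ x, Vx x := hVx ▸ Submodule.mem_top
  refine Submodule.iSup_induction Vx hv (motive := fun v => δ (a • v) ∈ T) (fun x v hv => ?_)
    (by simp) (fun v v' hv hv' => by simpa only [smul_add, map_add] using add_mem hv hv')
  rw [coaction_smul hΔ hS hcompat hδ hv]
  refine (iSup_le fun j => ?_ : _ ≤ T.comap (TensorProduct.map _ _)) (hHΔ i a ha)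
  exact fun t ht => Submodule.mem_iSup_of_mem (j : ℕ) <| map_mem_subTensor14 _ _
    (fun b hb => adjointAction_mem hH0 hHmul hHΔ hHS _ hb) (fun b hb => smul_mem_subSMul14 hb v) ht

theorem map_braiding_subTensor14_le (hΔ : ∀ g : G, Δ (of k G g) = of k G g ⊗ₜ[k] of k G g)
    (hS : ∀ g : G, S (of k G g) = of k G g⁻¹) {H : ℕ → Submodule k (MonoidAlgebra k G)}
    (hH0 : H 0 = ⊤) (hHmul : ∀ i j : ℕ, H i * H j ≤ H (i + j))
    (hHΔ : ∀ i : ℕ, ∀ x ∈ H i, Δ x ∈ ⨆ j : Fin (i + 1), subTensor14 (H j) (H (i - (j : ℕ))))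
    (hHS : ∀ i : ℕ, 1 ≤ i → ∀ x ∈ H i, S x ∈ H i) (hVx : ⨆ x, Vx x = ⊤)
    (hcompat : ∀ g x : G, ∀ v ∈ Vx x, of k G g • v ∈ Vx (g * x * g⁻¹))
    (hδ : ∀ x : G, ∀ v ∈ Vx x, δ v = of k G x ⊗ₜ[k] v) {c : V ⊗[k] V →ₗ[k] V ⊗[k] V}
    (hc : ∀ g : G, ∀ u ∈ Vx g, ∀ v : V, c (u ⊗ₜ[k] v) = (of k G g • v) ⊗ₜ[k] u) (i j : ℕ) :
    Submodule.map c (subTensor14 (subSMul14 (V := V) (H i)) (subSMul14 (V := V) (H j))) ≤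
      ⨆ (kl : ℕ × ℕ) (_ : i + j ≤ kl.1 + kl.2),
        subTensor14 (subSMul14 (V := V) (H kl.1)) (subSMul14 (V := V) (H kl.2)) := by
  set T := ⨆ (kl : ℕ × ℕ) (_ : i + j ≤ kl.1 + kl.2),
    subTensor14 (subSMul14 (V := V) (H kl.1)) (subSMul14 (V := V) (H kl.2))
  refine Submodule.map_le_iff_le_comap.2 <| subTensor14_le_iff.2 fun u hu w hw => ?_
  rw [Submodule.mem_comap, braiding_tmul hVx hδ hc]
  refine (iSup_le fun l => ?_ : _ ≤ T.comap (TensorProduct.map (LinearMap.smulRight .id w) .id))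
    (coaction_mem_filtration hΔ hS hH0 hHmul hHΔ hHS hVx hcompat hδ hu)
  refine fun t ht => Submodule.mem_iSup_of_mem (l + j, i - l) <| Submodule.mem_iSup_of_mem
    (by omega) <| map_mem_subTensor14 _ _ (fun b hb => ?_) (fun _ h => h) ht
  exact smul_mem_subSMul14_of_mul_le (hHmul l j) hb hw

end YetterDrinfeld

theorem stmt14_general {k : Type*} [Field k] {G : Type*} [Group G] [DecidableEq G]
    -- the structure maps of the Hopf algebra kG
    (Δ : MonoidAlgebra k G →ₗ[k] MonoidAlgebra k G ⊗[k] MonoidAlgebra k G)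
    (hΔ : ∀ g : G, Δ (MonoidAlgebra.of k G g) =
      MonoidAlgebra.of k G g ⊗ₜ[k] MonoidAlgebra.of k G g)
    (S : MonoidAlgebra k G →ₗ[k] MonoidAlgebra k G)
    (hS : ∀ g : G, S (MonoidAlgebra.of k G g) = MonoidAlgebra.of k G g⁻¹)
    -- (H_i) is a decreasing Hopf algebra filtration of kG with H_n = 0
    (H : ℕ → Submodule k (MonoidAlgebra k G)) (n : ℕ)
    (hH0 : H 0 = ⊤)
    (hHdec : Antitone H)
    (hHmul : ∀ i j : ℕ, H i * H j ≤ H (i + j))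
    (hHΔ : ∀ i : ℕ, ∀ x ∈ H i, Δ x ∈ ⨆ j : Fin (i + 1), subTensor14 (H j) (H (i - (j : ℕ))))
    (hHS : ∀ i : ℕ, 1 ≤ i → ∀ x ∈ H i, S x ∈ H i)
    (hHn : H n = ⊥)
    -- V is a Yetter--Drinfeld module over kG with coaction δ and braiding c
    {V : Type*} [AddCommGroup V] [Module k V] [Module (MonoidAlgebra k G) V]
    [IsScalarTower k (MonoidAlgebra k G) V]
    (Vx : G → Submodule k V)
    (hgrad : DirectSum.IsInternal Vx)
    (hcompat : ∀ g x : G, ∀ v ∈ Vx x, MonoidAlgebra.of k G g • v ∈ Vx (g * x * g⁻¹))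
    (δ : V →ₗ[k] MonoidAlgebra k G ⊗[k] V)
    (hδ : ∀ x : G, ∀ v ∈ Vx x, δ v = MonoidAlgebra.of k G x ⊗ₜ[k] v)
    (c : V ⊗[k] V →ₗ[k] V ⊗[k] V)
    (hc : ∀ g : G, ∀ u ∈ Vx g, ∀ v : V,
      c (u ⊗ₜ[k] v) = (MonoidAlgebra.of k G g • v) ⊗ₜ[k] u) :
    (∀ i : ℕ, ∀ w ∈ subSMul14 (V := V) (H i),
      δ w ∈ ⨆ kk : ℕ, subTensor14 (H kk) (subSMul14 (V := V) (H (i - kk)))) ∧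
    subSMul14 (V := V) (H 0) = ⊤ ∧
    (Antitone fun i => subSMul14 (V := V) (H i)) ∧
    (⨅ i : ℕ, subSMul14 (V := V) (H i)) = ⊥ ∧
    (∀ i j : ℕ,
      Submodule.map c (subTensor14 (subSMul14 (V := V) (H i)) (subSMul14 (V := V) (H j))) ≤
        ⨆ (kl : ℕ × ℕ) (_ : i + j ≤ kl.1 + kl.2),
          subTensor14 (subSMul14 (V := V) (H kl.1)) (subSMul14 (V := V) (H kl.2))) := by
  have hVx := hgrad.submodule_iSup_eq_top
  refine ⟨fun _ _ hw => coaction_mem_filtration hΔ hS hH0 hHmul hHΔ hHS hVx hcompat hδ hw,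
    by rw [hH0, subSMul14_top], fun _ _ hij => subSMul14_mono (hHdec hij), ?_,
    map_braiding_subTensor14_le hΔ hS hH0 hHmul hHΔ hHS hVx hcompat hδ hc⟩
  exact eq_bot_iff.2 <| (iInf_le _ n).trans (by rw [hHn, subSMul14_bot])

/-- Let `k` be a field, `G` a group, and `(H_i)_{0 ≤ i ≤ n}` a decreasing Hopf
algebra filtration of `kG` with `H_n = 0`. Let `V` be a Yetter–Drinfeld module over `kG` with
coaction `δ` (`δ(v) = x ⊗ v` for `v ∈ V_x`) and braiding `c`, and set `F^iV = H_iV`. Then: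
(i) `δ(F^iV) ⊆ Σ_{k≥0} H_k ⊗ F^{i−k}V`; and (ii) `(F^iV)` is a decreasing filtration of the
braided vector space `(V, c)`. -/
theorem stmt14 {k : Type*} [Field k] {G : Type*} [Group G] [DecidableEq G]
    -- the structure maps of the Hopf algebra kG
    (Δ : MonoidAlgebra k G →ₗ[k] MonoidAlgebra k G ⊗[k] MonoidAlgebra k G)
    (hΔ : ∀ g : G, Δ (MonoidAlgebra.of k G g) =
      MonoidAlgebra.of k G g ⊗ₜ[k] MonoidAlgebra.of k G g)
    (ε : MonoidAlgebra k G →ₗ[k] k)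
    (hε : ∀ g : G, ε (MonoidAlgebra.of k G g) = 1)
    (S : MonoidAlgebra k G →ₗ[k] MonoidAlgebra k G)
    (hS : ∀ g : G, S (MonoidAlgebra.of k G g) = MonoidAlgebra.of k G g⁻¹)
    -- (H_i) is a decreasing Hopf algebra filtration of kG with H_n = 0
    (H : ℕ → Submodule k (MonoidAlgebra k G)) (n : ℕ) (hn : 1 ≤ n)
    (hH0 : H 0 = ⊤)
    (hHdec : Antitone H)
    (hHmul : ∀ i j : ℕ, H i * H j ≤ H (i + j))
    (hHΔ : ∀ i : ℕ, ∀ x ∈ H i, Δ x ∈ ⨆ j : Fin (i + 1), subTensor14 (H j) (H (i - (j : ℕ))))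
    (hHε : ∀ i : ℕ, 1 ≤ i → ∀ x ∈ H i, ε x = 0)
    (hHS : ∀ i : ℕ, 1 ≤ i → ∀ x ∈ H i, S x ∈ H i)
    (hHn : H n = ⊥)
    -- V is a Yetter--Drinfeld module over kG with coaction δ and braiding c
    {V : Type*} [AddCommGroup V] [Module k V] [Module (MonoidAlgebra k G) V]
    [IsScalarTower k (MonoidAlgebra k G) V]
    (Vx : G → Submodule k V)
    (hgrad : DirectSum.IsInternal Vx)
    (hcompat : ∀ g x : G, ∀ v ∈ Vx x, MonoidAlgebra.of k G g • v ∈ Vx (g * x * g⁻¹))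
    (δ : V →ₗ[k] MonoidAlgebra k G ⊗[k] V)
    (hδ : ∀ x : G, ∀ v ∈ Vx x, δ v = MonoidAlgebra.of k G x ⊗ₜ[k] v)
    (c : V ⊗[k] V →ₗ[k] V ⊗[k] V)
    (hc : ∀ g : G, ∀ u ∈ Vx g, ∀ v : V,
      c (u ⊗ₜ[k] v) = (MonoidAlgebra.of k G g • v) ⊗ₜ[k] u) :
    (∀ i : ℕ, ∀ w ∈ subSMul14 (V := V) (H i),
      δ w ∈ ⨆ kk : ℕ, subTensor14 (H kk) (subSMul14 (V := V) (H (i - kk)))) ∧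
    subSMul14 (V := V) (H 0) = ⊤ ∧
    (Antitone fun i => subSMul14 (V := V) (H i)) ∧
    (⨅ i : ℕ, subSMul14 (V := V) (H i)) = ⊥ ∧
    (∀ i j : ℕ,
      Submodule.map c (subTensor14 (subSMul14 (V := V) (H i)) (subSMul14 (V := V) (H j))) ≤
        ⨆ (kl : ℕ × ℕ) (_ : i + j ≤ kl.1 + kl.2),
          subTensor14 (subSMul14 (V := V) (H kl.1)) (subSMul14 (V := V) (H kl.2))) :=
  stmt14_general Δ hΔ S hS H n hH0 hHdec hHmul hHΔ hHS hHn Vx hgrad hcompat δ hδ c hc
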